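/- arXiv:2208.06934 — 7 statements merged into one kernel-verified Lean document; each statement's English description precedes it below -/
import Mathlib

section
/- The function a ↦ (1+a)²/√(a²+6a+1) on [0,1] attains its maximum value √2 at a = 1; equivalently, for all a ∈ [0,1], (1+a)²/√(a²+6a+1) ≤ √2. -/
theorem stmt_3 :
    (∀ a ∈ Set.Icc (0 : ℝ) 1,
      (1 + a) ^ 2 / Real.sqrt (a ^ 2 + 6 * a + 1) ≤ Real.sqrt 2) ∧
    (1 + (1 : ℝ)) ^ 2 / Real.sqrt ((1 : ℝ) ^ 2 + 6 * 1 + 1) = Real.sqrt 2 := by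
  constructor
  · rintro a ⟨h0, h1⟩
    have hpos : (0:ℝ) < a ^ 2 + 6 * a + 1 := by nlinarith
    rw [div_le_iff₀ (Real.sqrt_pos.mpr hpos)]
    have h : Real.sqrt 2 * Real.sqrt (a ^ 2 + 6 * a + 1)
        = Real.sqrt (2 * (a ^ 2 + 6 * a + 1)) := by
      rw [← Real.sqrt_mul (by norm_num)]
    rw [h]
    have h2 : (1 + a) ^ 2 = Real.sqrt (((1 + a) ^ 2) ^ 2) := by
      rw [Real.sqrt_sq (by positivity)]
    rw [h2]
    apply Real.sqrt_le_sqrt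
    nlinarith [mul_nonneg (sub_nonneg.2 h1)
      (show (0:ℝ) ≤ (1+a)^3 + 2*(1+a)^2 + 2*(1+a) - 4 by nlinarith)]
  · have : ((1:ℝ) ^ 2 + 6 * 1 + 1) = 8 := by norm_num
    have h4 : Real.sqrt 4 = 2 := by
      rw [show (4:ℝ) = 2^2 by norm_num, Real.sqrt_sq (by norm_num)]
    rw [this, show (8:ℝ) = 4 * 2 by norm_num, Real.sqrt_mul (by norm_num), h4,
      div_eq_iff (by positivity)]
    nlinarith [Real.sq_sqrt (show (0:ℝ) ≤ 2 by norm_num)]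
end

section
/- Let h : [0,1) → ℝ be a nonnegative C² function with h(0)=1, h'(0)=0, satisfying h''(x) ≤ (2a/(1-x²)) h'(x) + (b/(1-x²)²) h(x) for all x ∈ [0,1), where a,b > 0 are constants. Then with c = √(1+b+a²), for all x ∈ [0,1): h'(x) ≤ ((a+c)/(1-x²)) h(x). -/
/-!
Put `c = √(1 + b + a²)` and `φ = h' - (a + c) h / (1 - x²)`. The differential inequality for `h`,
together with `h ≥ 0`, `x ≥ 0` and `c² - a² ≥ b`, gives `φ' + (c - a) φ / (1 - x²) ≤ 0`.
With the integrating factor `exp ((c - a) artanh x)` this says that `φ · exp ((c - a) artanh x)`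
is nonincreasing, so `φ` keeps the sign of `φ 0 = -(a + c) ≤ 0`.
-/

open Real Set

theorem Real.hasDerivAt_artanh {x : ℝ} (hx : x ∈ Ioo (-1) 1) :
    HasDerivAt artanh (1 / (1 - x ^ 2)) x := by
  obtain ⟨hx₁, hx₂⟩ := hx
  have h₁ : 1 + x ≠ 0 := by linarith
  have h₂ : 1 - x ≠ 0 := by linarith
  have h₃ : 1 - x ^ 2 ≠ 0 := by nlinarith
  have hquot := ((hasDerivAt_id x).const_add 1).div ((hasDerivAt_id x).const_sub 1) h₂
  have hlog := (hquot.log (div_ne_zero h₁ h₂)).const_mul (1 / 2)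
  have heq : (fun y => 1 / 2 * log ((1 + id y) / (1 - id y))) =ᶠ[nhds x] artanh := by
    filter_upwards [Ioo_mem_nhds hx₁ hx₂] with y hy
    exact (artanh_eq_half_log (Ioo_subset_Icc_self hy)).symm
  refine (hlog.congr_of_eventuallyEq heq.symm).congr_deriv ?_
  simp only [Pi.div_apply, id]
  field_simp
  ring

theorem nonpos_of_hasDerivAt_add_mul_nonpos {p q : ℝ} {φ φ' k F : ℝ → ℝ}
    (hF : ∀ x ∈ Ico p q, HasDerivAt F (k x) x) (hφ : ∀ x ∈ Ico p q, HasDerivAt φ (φ' x) x)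
    (hineq : ∀ x ∈ Ico p q, φ' x + k x * φ x ≤ 0) (hp : φ p ≤ 0) :
    ∀ x ∈ Ico p q, φ x ≤ 0 := by
  have hψ : ∀ x ∈ Ico p q,
      HasDerivAt (fun y => φ y * exp (F y)) ((φ' x + k x * φ x) * exp (F x)) x := fun x hx =>
    ((hφ x hx).mul (hF x hx).exp).congr_deriv (by ring)
  have hanti : AntitoneOn (fun y => φ y * exp (F y)) (Ico p q) := by
    refine antitoneOn_of_hasDerivWithinAt_nonpos (f' := fun x => (φ' x + k x * φ x) * exp (F x))
      (convex_Ico p q)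
      (fun x hx => (hψ x hx).continuousAt.continuousWithinAt) (fun x hx => ?_) (fun x hx => ?_)
    all_goals rw [interior_Ico] at hx
    · exact (hψ x (Ioo_subset_Ico_self hx)).hasDerivWithinAt
    · exact mul_nonpos_of_nonpos_of_nonneg (hineq x (Ioo_subset_Ico_self hx)) (exp_pos _).le
  intro x hx
  have hpx : φ x * exp (F x) ≤ φ p * exp (F p) :=
    hanti ⟨le_rfl, hx.1.trans_lt hx.2⟩ hx hx.1
  have := hpx.trans (mul_nonpos_of_nonpos_of_nonneg hp (exp_pos _).le)
  exact nonpos_of_mul_nonpos_left this (exp_pos _)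

/-- The left-hand side is `φ' + (c - a) φ / (1 - x²)` for `φ = h' - (a + c) h / (1 - x²)`, with
`h, h', h''` evaluated at `x`. -/
theorem riccati_defect_nonpos {a b c x h₀ h₁ h₂ : ℝ} (hc : b ≤ c ^ 2 - a ^ 2) (hac : 0 ≤ a + c)
    (hx : 0 ≤ x) (hs : 0 < 1 - x ^ 2) (hh : 0 ≤ h₀)
    (hineq : h₂ ≤ 2 * a / (1 - x ^ 2) * h₁ + b / (1 - x ^ 2) ^ 2 * h₀) :
    h₂ - ((a + c) * (2 * x) / (1 - x ^ 2) ^ 2 * h₀ + (a + c) / (1 - x ^ 2) * h₁)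
      + (c - a) / (1 - x ^ 2) * (h₁ - (a + c) / (1 - x ^ 2) * h₀) ≤ 0 := by
  have hexpand : h₂ - ((a + c) * (2 * x) / (1 - x ^ 2) ^ 2 * h₀ + (a + c) / (1 - x ^ 2) * h₁)
        + (c - a) / (1 - x ^ 2) * (h₁ - (a + c) / (1 - x ^ 2) * h₀)
      = h₂ - (2 * a / (1 - x ^ 2) * h₁
          + (2 * x * (a + c) + (c ^ 2 - a ^ 2)) / (1 - x ^ 2) ^ 2 * h₀) := by
    field_simp
    ring
  have hcoef : b / (1 - x ^ 2) ^ 2 * h₀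
      ≤ (2 * x * (a + c) + (c ^ 2 - a ^ 2)) / (1 - x ^ 2) ^ 2 * h₀ := by
    gcongr
    nlinarith
  rw [hexpand]
  linarith

theorem stmt_4_general (a b : ℝ) (hb : 0 < b)
    (h h' h'' : ℝ → ℝ)
    (hpos : ∀ x ∈ Set.Ico (0 : ℝ) 1, 0 ≤ h x)
    (hd1 : ∀ x ∈ Set.Ico (0 : ℝ) 1, HasDerivAt h (h' x) x)
    (hd2 : ∀ x ∈ Set.Ico (0 : ℝ) 1, HasDerivAt h' (h'' x) x)
    (h0 : h 0 = 1) (h0' : h' 0 = 0)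
    (hineq : ∀ x ∈ Set.Ico (0 : ℝ) 1,
      h'' x ≤ (2 * a / (1 - x ^ 2)) * h' x + (b / (1 - x ^ 2) ^ 2) * h x) :
    ∀ x ∈ Set.Ico (0 : ℝ) 1,
      h' x ≤ ((a + Real.sqrt (1 + b + a ^ 2)) / (1 - x ^ 2)) * h x := by
  set c := √(1 + b + a ^ 2)
  have hc : c ^ 2 = 1 + b + a ^ 2 := sq_sqrt (by positivity)
  have hac : 0 ≤ a + c := by
    linarith [neg_abs_le a, abs_le_sqrt (show a ^ 2 ≤ 1 + b + a ^ 2 by linarith)]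
  have hs : ∀ x ∈ Ico (0 : ℝ) 1, 0 < 1 - x ^ 2 := fun x ⟨hx₀, hx₁⟩ => by nlinarith
  have hcoef : ∀ x ∈ Ico (0 : ℝ) 1, HasDerivAt (fun y => (a + c) / (1 - y ^ 2))
      ((a + c) * (2 * x) / (1 - x ^ 2) ^ 2) x := fun x hx =>
    ((hasDerivAt_const x (a + c)).div ((hasDerivAt_pow 2 x).const_sub 1) (hs x hx).ne').congr_deriv
      (by push_cast; ring)
  have hφ : ∀ x ∈ Ico (0 : ℝ) 1, h' x - (a + c) / (1 - x ^ 2) * h x ≤ 0 := by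
    refine nonpos_of_hasDerivAt_add_mul_nonpos
      (fun x hx => ((hasDerivAt_artanh ⟨by linarith [hx.1], hx.2⟩).const_mul (c - a)).congr_deriv
        (mul_one_div _ _))
      (fun x hx => (hd2 x hx).sub ((hcoef x hx).mul (hd1 x hx)))
      (fun x hx => ?_) (by simp [h0, h0']; linarith)
    exact riccati_defect_nonpos (by linarith) hac hx.1 (hs x hx) (hpos x hx)
      (hineq x hx)
  intro x hx
  linarith [hφ x hx]

theorem stmt_4 (a b : ℝ) (ha : 0 < a) (hb : 0 < b)
    (h h' h'' : ℝ → ℝ)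
    (hpos : ∀ x ∈ Set.Ico (0 : ℝ) 1, 0 ≤ h x)
    (hd1 : ∀ x ∈ Set.Ico (0 : ℝ) 1, HasDerivAt h (h' x) x)
    (hd2 : ∀ x ∈ Set.Ico (0 : ℝ) 1, HasDerivAt h' (h'' x) x)
    (hc2 : ContinuousOn h'' (Set.Ico (0 : ℝ) 1))
    (h0 : h 0 = 1) (h0' : h' 0 = 0)
    (hineq : ∀ x ∈ Set.Ico (0 : ℝ) 1,
      h'' x ≤ (2 * a / (1 - x ^ 2)) * h' x + (b / (1 - x ^ 2) ^ 2) * h x) :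
    ∀ x ∈ Set.Ico (0 : ℝ) 1,
      h' x ≤ ((a + Real.sqrt (1 + b + a ^ 2)) / (1 - x ^ 2)) * h x :=
  stmt_4_general a b hb h h' h'' hpos hd1 hd2 h0 h0' hineq
end

section
/- Let h : [0,1) → ℝ be a nonnegative C² function with h(0)=1, h'(0)=0, satisfying h''(x) ≤ (2a/(1-x²)) h'(x) + (b/(1-x²)²) h(x) for all x ∈ [0,1), where a,b > 0. Then with c = √(1+b+a²), for all x ∈ [0,1): h(x) ≤ 2((1+x)/(1-x))^((a+c-1)/2). -/
noncomputable def uu (θ y : ℝ) : ℝ :=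
  Real.exp ((θ + 1) * Real.log (1 + y) - θ * Real.log (1 - y))

noncomputable def vv (θ y : ℝ) : ℝ := (θ + 1) / (1 + y) + θ / (1 - y)

noncomputable def ww (θ y : ℝ) : ℝ := -((θ + 1) / (1 + y) ^ 2) + θ / (1 - y) ^ 2

lemma hasDerivAt_uu (θ y : ℝ) (h1 : 0 < 1 + y) (h2 : 0 < 1 - y) :
    HasDerivAt (uu θ) (uu θ y * vv θ y) y := by
  have l1 : HasDerivAt (fun z : ℝ => Real.log (1 + z)) (1 / (1 + y)) y := by
    have h : HasDerivAt (fun z : ℝ => 1 + z) 1 y := (hasDerivAt_id y).const_add 1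
    simpa using h.log h1.ne'
  have l2 : HasDerivAt (fun z : ℝ => Real.log (1 - z)) (-1 / (1 - y)) y := by
    have h : HasDerivAt (fun z : ℝ => 1 - z) (-1) y := (hasDerivAt_id y).const_sub 1
    simpa using h.log h2.ne'
  have l3 : HasDerivAt (fun z : ℝ => (θ + 1) * Real.log (1 + z) - θ * Real.log (1 - z))
      ((θ + 1) * (1 / (1 + y)) - θ * (-1 / (1 - y))) y := (l1.const_mul _).sub (l2.const_mul _)
  have l4 := l3.exp
  have : uu θ y * vv θ y
      = Real.exp ((θ + 1) * Real.log (1 + y) - θ * Real.log (1 - y))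
        * ((θ + 1) * (1 / (1 + y)) - θ * (-1 / (1 - y))) := by
    unfold uu vv; ring
  rw [this]
  exact l4

lemma hasDerivAt_vv (θ y : ℝ) (h1 : 0 < 1 + y) (h2 : 0 < 1 - y) :
    HasDerivAt (vv θ) (ww θ y) y := by
  have hA : HasDerivAt (fun z : ℝ => 1 + z) 1 y := (hasDerivAt_id y).const_add 1
  have hB : HasDerivAt (fun z : ℝ => 1 - z) (-1) y := (hasDerivAt_id y).const_sub 1
  have l1 := (hasDerivAt_const y (θ + 1)).div hA h1.ne'
  have l2 := (hasDerivAt_const y θ).div hB h2.ne'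
  have l3 := l1.add l2
  have : ww θ y = (0 * (1 + y) - (θ + 1) * 1) / (1 + y) ^ 2
      + (0 * (1 - y) - θ * -1) / (1 - y) ^ 2 := by
    unfold ww; ring
  rw [this]
  exact l3

lemma super_aux (a b c y : ℝ) (ha : 0 ≤ a) (hbc : c ^ 2 = 1 + b + a ^ 2)
    (hy0 : 0 ≤ y) (hy1 : y < 1) :
    2 * a / (1 - y ^ 2) * (uu ((a + c - 1) / 2) y * vv ((a + c - 1) / 2) y)
      + b / (1 - y ^ 2) ^ 2 * uu ((a + c - 1) / 2) y
      ≤ uu ((a + c - 1) / 2) y * vv ((a + c - 1) / 2) y * vv ((a + c - 1) / 2) y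
        + uu ((a + c - 1) / 2) y * ww ((a + c - 1) / 2) y := by
  have hb : b = c ^ 2 - 1 - a ^ 2 := by linarith
  subst hb
  have h1 : (0:ℝ) < 1 + y := by linarith
  have h2 : (0:ℝ) < 1 - y := by linarith
  have h12 : (0:ℝ) < 1 - y ^ 2 := by nlinarith
  have hupos : 0 < uu ((a + c - 1) / 2) y := Real.exp_pos _
  set U := uu ((a + c - 1) / 2) y with hU
  have key : U * vv ((a + c - 1) / 2) y * vv ((a + c - 1) / 2) y + U * ww ((a + c - 1) / 2) y
      - (2 * a / (1 - y ^ 2) * (U * vv ((a + c - 1) / 2) y)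
        + (c ^ 2 - 1 - a ^ 2) / (1 - y ^ 2) ^ 2 * U)
      = U * (2 * a * y) / (1 - y ^ 2) ^ 2 := by
    simp only [vv, ww]
    field_simp
    ring
  have pos : 0 ≤ U * (2 * a * y) / (1 - y ^ 2) ^ 2 := by positivity
  linarith

theorem stmt_5 (a b : ℝ) (ha : 0 < a) (hb : 0 < b)
    (h h' h'' : ℝ → ℝ)
    (hpos : ∀ x ∈ Set.Ico (0 : ℝ) 1, 0 ≤ h x)
    (hd1 : ∀ x ∈ Set.Ico (0 : ℝ) 1, HasDerivAt h (h' x) x)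
    (hd2 : ∀ x ∈ Set.Ico (0 : ℝ) 1, HasDerivAt h' (h'' x) x)
    (hc2 : ContinuousOn h'' (Set.Ico (0 : ℝ) 1))
    (h0 : h 0 = 1) (h0' : h' 0 = 0)
    (hineq : ∀ x ∈ Set.Ico (0 : ℝ) 1,
      h'' x ≤ (2 * a / (1 - x ^ 2)) * h' x + (b / (1 - x ^ 2) ^ 2) * h x) :
    ∀ x ∈ Set.Ico (0 : ℝ) 1,
      h x ≤ 2 * ((1 + x) / (1 - x)) ^ ((a + Real.sqrt (1 + b + a ^ 2) - 1) / 2) := by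
  have hca : (0:ℝ) ≤ 1 + b + a ^ 2 := by positivity
  set c := Real.sqrt (1 + b + a ^ 2) with hcdef
  have hcsq : c ^ 2 = 1 + b + a ^ 2 := Real.sq_sqrt hca
  have hcnn : 0 ≤ c := Real.sqrt_nonneg _
  set θ := (a + c - 1) / 2 with hθdef
  set W : ℝ → ℝ := fun y => uu θ y - h y with hW
  set W1 : ℝ → ℝ := fun y => uu θ y * vv θ y - h' y with hW1
  have hy1 : ∀ y ∈ Set.Ico (0:ℝ) 1, (0:ℝ) < 1 + y := fun y hy => by
    have := hy.1; linarith
  have hy2 : ∀ y ∈ Set.Ico (0:ℝ) 1, (0:ℝ) < 1 - y := fun y hy => by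
    have := hy.2; linarith
  have hWd : ∀ y ∈ Set.Ico (0:ℝ) 1, HasDerivAt W (W1 y) y := fun y hy =>
    (hasDerivAt_uu θ y (hy1 y hy) (hy2 y hy)).sub (hd1 y hy)
  have hW1d : ∀ y ∈ Set.Ico (0:ℝ) 1,
      HasDerivAt W1 (uu θ y * vv θ y * vv θ y + uu θ y * ww θ y - h'' y) y := fun y hy =>
    (((hasDerivAt_uu θ y (hy1 y hy) (hy2 y hy)).mul
      (hasDerivAt_vv θ y (hy1 y hy) (hy2 y hy)))).sub (hd2 y hy)
  have hW0 : W 0 = 0 := by simp [hW, uu, h0]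
  have hW10 : W1 0 = a + c := by
    simp [hW1, uu, vv, h0']
    rw [hθdef]; ring
  have hacpos : 0 < a + c := by linarith
  have hkey : ∀ y ∈ Set.Ico (0:ℝ) 1,
      2 * a / (1 - y ^ 2) * (uu θ y * vv θ y) + b / (1 - y ^ 2) ^ 2 * uu θ y
        ≤ uu θ y * vv θ y * vv θ y + uu θ y * ww θ y := by
    intro y hy
    rw [hθdef]
    exact super_aux a b c y ha.le hcsq hy.1 hy.2
  have hWmono : ∀ r, r ∈ Set.Ico (0:ℝ) 1 → (∀ z ∈ Set.Ioo (0:ℝ) r, 0 ≤ W1 z) →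
      MonotoneOn W (Set.Icc 0 r) := by
    intro r hr hposr
    have hsub : Set.Icc (0:ℝ) r ⊆ Set.Ico (0:ℝ) 1 :=
      fun z hz => ⟨hz.1, lt_of_le_of_lt hz.2 hr.2⟩
    apply monotoneOn_of_deriv_nonneg (convex_Icc 0 r)
    · exact fun z hz => (hWd z (hsub hz)).continuousAt.continuousWithinAt
    · intro z hz
      rw [interior_Icc] at hz
      exact (hWd z (hsub (Set.Ioo_subset_Icc_self hz))).differentiableAt.differentiableWithinAt
    · intro z hz
      rw [interior_Icc] at hz
      rw [(hWd z (hsub (Set.Ioo_subset_Icc_self hz))).deriv]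
      exact hposr z hz
  have hW1nonneg : ∀ y ∈ Set.Ico (0:ℝ) 1, 0 ≤ W1 y := by
    intro y hy
    by_contra hneg
    push_neg at hneg
    set K := Set.Icc (0:ℝ) y ∩ W1 ⁻¹' Set.Iic 0 with hK
    have hsub : Set.Icc (0:ℝ) y ⊆ Set.Ico (0:ℝ) 1 :=
      fun z hz => ⟨hz.1, lt_of_le_of_lt hz.2 hy.2⟩
    have hKc : IsClosed K :=
      ContinuousOn.preimage_isClosed_of_isClosed
        (fun z hz => ((hW1d z (hsub hz)).continuousAt).continuousWithinAt)
        isClosed_Icc isClosed_Iic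
    have hKne : K.Nonempty := ⟨y, ⟨⟨hy.1, le_refl y⟩, le_of_lt hneg⟩⟩
    have hKbdd : BddBelow K := ⟨0, fun z hz => hz.1.1⟩
    set m := sInf K with hm
    have hmK : m ∈ K := hKc.csInf_mem hKne hKbdd
    have hm0 : 0 ≤ m := hmK.1.1
    have hmy : m ≤ y := hmK.1.2
    have hm1 : m ∈ Set.Ico (0:ℝ) 1 := ⟨hm0, lt_of_le_of_lt hmy hy.2⟩
    have hW1m : W1 m ≤ 0 := hmK.2
    have hIoo : ∀ z ∈ Set.Ioo (0:ℝ) m, 0 ≤ W1 z := by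
      intro z hz
      by_contra hzneg
      push_neg at hzneg
      have hzK : z ∈ K :=
        ⟨⟨le_of_lt hz.1, le_trans (le_of_lt hz.2) hmy⟩, le_of_lt hzneg⟩
      have := csInf_le hKbdd hzK
      rw [← hm] at this
      linarith [hz.2]
    have hWmon := hWmono m hm1 hIoo
    have hWnn : ∀ z ∈ Set.Icc (0:ℝ) m, 0 ≤ W z := by
      intro z hz
      have h01 := hWmon ⟨le_refl 0, hm0⟩ hz hz.1
      rw [hW0] at h01
      exact h01
    have hsubm : Set.Icc (0:ℝ) m ⊆ Set.Ico (0:ℝ) 1 :=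
      fun z hz => ⟨hz.1, lt_of_le_of_lt hz.2 hm1.2⟩
    have hW1mon : MonotoneOn W1 (Set.Icc 0 m) := by
      apply monotoneOn_of_deriv_nonneg (convex_Icc 0 m)
      · exact fun z hz => (hW1d z (hsubm hz)).continuousAt.continuousWithinAt
      · intro z hz
        rw [interior_Icc] at hz
        exact (hW1d z (hsubm (Set.Ioo_subset_Icc_self hz))).differentiableAt.differentiableWithinAt
      · intro z hz
        rw [interior_Icc] at hz
        have hzI : z ∈ Set.Ico (0:ℝ) 1 := hsubm (Set.Ioo_subset_Icc_self hz)
        rw [(hW1d z hzI).deriv]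
        have e1 := hkey z hzI
        have e2 := hineq z hzI
        have hz2 : (0:ℝ) < 1 - z ^ 2 := by nlinarith [hzI.1, hzI.2]
        have c1 : (0:ℝ) ≤ 2 * a / (1 - z ^ 2) := by positivity
        have c2 : (0:ℝ) ≤ b / (1 - z ^ 2) ^ 2 := by positivity
        have e3 : 0 ≤ 2 * a / (1 - z ^ 2) * W1 z := mul_nonneg c1 (hIoo z hz)
        have e4 : 0 ≤ b / (1 - z ^ 2) ^ 2 * W z :=
          mul_nonneg c2 (hWnn z (Set.Ioo_subset_Icc_self hz))
        simp only [hW1, hW, mul_sub] at e3 e4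
        linarith
    have h0m := hW1mon ⟨le_refl 0, hm0⟩ ⟨hm0, le_refl m⟩ hm0
    rw [hW10] at h0m
    linarith
  intro x hx
  have hWmonx := hWmono x hx
    (fun z hz => hW1nonneg z ⟨le_of_lt hz.1, lt_trans hz.2 hx.2⟩)
  have hWx : 0 ≤ W x := by
    have h01 := hWmonx ⟨le_refl 0, hx.1⟩ ⟨hx.1, le_refl x⟩ hx.1
    rw [hW0] at h01
    exact h01
  have hhx : h x ≤ uu θ x := by
    simp only [hW] at hWx
    linarith
  have h1 := hy1 x hx
  have h2 := hy2 x hx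
  have hrpow : ((1 + x) / (1 - x)) ^ θ
      = Real.exp (θ * (Real.log (1 + x) - Real.log (1 - x))) := by
    rw [Real.rpow_def_of_pos (div_pos h1 h2), Real.log_div h1.ne' h2.ne']
    ring_nf
  have huux : uu θ x = (1 + x) * Real.exp (θ * (Real.log (1 + x) - Real.log (1 - x))) := by
    unfold uu
    rw [show (θ + 1) * Real.log (1 + x) - θ * Real.log (1 - x)
        = Real.log (1 + x) + θ * (Real.log (1 + x) - Real.log (1 - x)) by ring,
      Real.exp_add, Real.exp_log h1]
  have hexp : 0 < Real.exp (θ * (Real.log (1 + x) - Real.log (1 - x))) := Real.exp_pos _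
  calc h x ≤ uu θ x := hhx
    _ = (1 + x) * Real.exp (θ * (Real.log (1 + x) - Real.log (1 - x))) := huux
    _ ≤ 2 * Real.exp (θ * (Real.log (1 + x) - Real.log (1 - x))) := by
        have hx2 : 1 + x ≤ 2 := by linarith [hx.2]
        nlinarith
    _ = 2 * ((1 + x) / (1 - x)) ^ θ := by rw [hrpow]
end

section
/- Let w : [0,∞) → ℝ be a nonnegative C² function with w(0)=1, w'(0)=0, satisfying w'' ≤ 2a w' + (1+b) w, where a,b > 0. Then w(s) ≤ e^((a+c)s) for all s ≥ 0, where c = √(1+b+a²). -/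
/-!
The characteristic roots of `λ² = 2aλ + (1 + b)` are `a ± c`. Factoring the differential
inequality accordingly, `g = w' - (a - c) w` satisfies `g' ≤ (a + c) g` with `g 0 = c - a`, so
Grönwall gives `g ≤ (c - a) e^{(a+c)s}`. Since `w ≥ 0` and `a ≤ c`, this bounds
`w' ≤ (c - a) e^{(a+c)s} ≤ (a + c) e^{(a+c)s}`, the derivative of `e^{(a+c)s}`, and both sides
start at `1`.
-/

open Real

theorem le_mul_exp_of_hasDerivAt_le_mul {f f' : ℝ → ℝ} {K a : ℝ}
    (hf : ∀ x, a ≤ x → HasDerivAt f (f' x) x) (bound : ∀ x, a ≤ x → f' x ≤ K * f x)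
    {x : ℝ} (hx : a ≤ x) : f x ≤ f a * exp (K * (x - a)) := by
  rw [← gronwallBound_ε0]
  refine le_gronwallBound_of_liminf_deriv_right_le (f' := f') (b := x)
    (fun y hy => (hf y hy.1).continuousAt.continuousWithinAt)
    (fun y hy r hr => (hf y hy.1).hasDerivWithinAt.liminf_right_slope_le hr) le_rfl
    (fun y hy => by simpa using bound y hy.1) x ⟨hx, le_rfl⟩

theorem le_of_hasDerivAt_le_hasDerivAt {f f' g g' : ℝ → ℝ} {a : ℝ}
    (hf : ∀ x, a ≤ x → HasDerivAt f (f' x) x) (hg : ∀ x, a ≤ x → HasDerivAt g (g' x) x)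
    (ha : f a ≤ g a) (bound : ∀ x, a ≤ x → f' x ≤ g' x) {x : ℝ} (hx : a ≤ x) :
    f x ≤ g x :=
  image_le_of_deriv_right_le_deriv_boundary
    (fun y hy => (hf y hy.1).continuousAt.continuousWithinAt)
    (fun y hy => (hf y hy.1).hasDerivWithinAt) ha
    (fun y hy => (hg y hy.1).continuousAt.continuousWithinAt)
    (fun y hy => (hg y hy.1).hasDerivWithinAt) (fun y hy => bound y hy.1) ⟨hx, le_rfl⟩

theorem stmt_6 (a b : ℝ) (ha : 0 < a) (hb : 0 < b)
    (w w' w'' : ℝ → ℝ)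
    (hpos : ∀ s : ℝ, 0 ≤ s → 0 ≤ w s)
    (hd1 : ∀ s : ℝ, 0 ≤ s → HasDerivAt w (w' s) s)
    (hd2 : ∀ s : ℝ, 0 ≤ s → HasDerivAt w' (w'' s) s)
    (h0 : w 0 = 1) (h0' : w' 0 = 0)
    (hineq : ∀ s : ℝ, 0 ≤ s → w'' s ≤ 2 * a * w' s + (1 + b) * w s) :
    ∀ s : ℝ, 0 ≤ s →
      w s ≤ Real.exp ((a + Real.sqrt (1 + b + a ^ 2)) * s) := by
  set c := √(1 + b + a ^ 2)
  have hc_sq : c ^ 2 = 1 + b + a ^ 2 := sq_sqrt (by positivity)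
  have hac : a ≤ c := by nlinarith [sqrt_nonneg (1 + b + a ^ 2)]
  have hg : ∀ t, 0 ≤ t → w' t - (a - c) * w t ≤ (c - a) * exp ((a + c) * t) := by
    intro t ht
    have := le_mul_exp_of_hasDerivAt_le_mul
      (f := fun t => w' t - (a - c) * w t) (K := a + c)
      (fun x hx => (hd2 x hx).sub ((hd1 x hx).const_mul (a - c)))
      (fun x hx => by linear_combination hineq x hx - w x * hc_sq) ht
    simpa [h0, h0'] using this
  have hw' : ∀ t, 0 ≤ t → w' t ≤ exp ((a + c) * t) * (a + c) := by
    intro t ht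
    have : (a - c) * w t ≤ 0 := mul_nonpos_of_nonpos_of_nonneg (by linarith) (hpos t ht)
    nlinarith [hg t ht, exp_pos ((a + c) * t)]
  intro s hs
  have hexp : ∀ t, 0 ≤ t →
      HasDerivAt (fun t => exp ((a + c) * t)) (exp ((a + c) * t) * (a + c)) t :=
    fun t _ => by simpa using ((hasDerivAt_id t).const_mul (a + c)).exp
  exact le_of_hasDerivAt_le_hasDerivAt hd1 hexp (by simp [h0]) hw' hs
end

section
/- Let c ∈ (0, 1/6.1] and let h : [0,T) → ℝ be the maximal solution of h'(x) = (1.6c/(1-x²)) h(x) + 4.5c/(1-x²)² + h(x)², h(0) = 0, with T ≤ 1. Then T = 1 and h(x) ≤ x/(1-x²) for all x ∈ [0,1). -/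
/-!
`x / (1 - x²)` is a strict upper barrier for the Riccati equation: at `y = x / (1 - x²)` the
right-hand side equals `(1.6 c x + 4.5 c + x²) / (1 - x²)²`, which is smaller than the barrier's
derivative `(1 + x²) / (1 - x²)²` because `1.6 c x + 4.5 c < 6.1 c ≤ 1`. Likewise `0` is a strict
lower barrier, since the right-hand side is `4.5 c / (1 - x²)² > 0` at `y = 0`. So
`0 ≤ h x ≤ x / (1 - x²)` on `[0, T)`. If `T < 1`, then `h` stays bounded near `T`, where the
right-hand side is locally Lipschitz, so by Picard–Lindelöf and uniqueness `h` extends past `T`,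
contradicting maximality.
-/

open Set Metric
open scoped NNReal Topology

section Continuation

variable {E : Type*} [NormedAddCommGroup E] [NormedSpace ℝ E] [CompleteSpace E]

theorem IsPicardLindelof.exists_eq_forall_mem_Icc_hasDerivWithinAt_mem_closedBall
    {v : ℝ → E → E} {tmin tmax : ℝ} {t₀ : Icc tmin tmax} {x₀ : E} {a L K : ℝ≥0}
    (hv : IsPicardLindelof v t₀ x₀ a 0 L K) :
    ∃ α : ℝ → E, α t₀ = x₀ ∧ ∀ t ∈ Icc tmin tmax,
      HasDerivWithinAt α (v t (α t)) (Icc tmin tmax) t ∧ α t ∈ closedBall x₀ a := by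
  obtain ⟨α, hα⟩ := ODE.FunSpace.exists_isFixedPt_next hv (mem_closedBall_self le_rfl)
  refine ⟨α.compProj, by rw [ODE.FunSpace.compProj_val, ← hα, ODE.FunSpace.next_apply₀],
    fun t ht ↦ ⟨?_, α.compProj_mem_closedBall hv.mul_max_le⟩⟩
  refine ODE.hasDerivWithinAt_picard_Icc t₀.2 hv.continuousOn_uncurry
    α.continuous_compProj.continuousOn (fun _ _ ↦ α.compProj_mem_closedBall hv.mul_max_le)
    x₀ ht |>.congr_of_mem (fun t' ht' ↦ ?_) ht
  nth_rw 1 [← hα]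
  rw [ODE.FunSpace.compProj_of_mem ht', ODE.FunSpace.next_apply]

theorem exists_hasDerivAt_extension {v : ℝ → E → E} {f : ℝ → E} {s : Set E}
    {a T δ : ℝ} {R L C : ℝ≥0} (haT : a < T) (hδ : 0 < δ) (hR : 0 < R)
    (hlip : ∀ t ∈ Icc (T - δ) (T + δ), LipschitzOnWith L (v t) s)
    (hcont : ContinuousOn (Function.uncurry v) (Icc (T - δ) (T + δ) ×ˢ s))
    (hle : ∀ t ∈ Icc (T - δ) (T + δ), ∀ y ∈ s, ‖v t y‖ ≤ C)
    (hf : ∀ t ∈ Ico a T, HasDerivAt f (v t (f t)) t)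
    (hfs : ∀ t ∈ Ico a T, closedBall (f t) R ⊆ s) :
    ∃ T' > T, ∃ g : ℝ → E, (∀ t ∈ Ico a T', HasDerivAt g (v t (g t)) t) ∧
      EqOn g f (Ico a T) := by
  obtain ⟨r, hr0, hrδ, hra, hrC⟩ : ∃ r > 0, r ≤ δ ∧ r ≤ T - a ∧ 2 * C * r ≤ R := by
    refine ⟨min (min δ (T - a)) (R / (2 * C + 1)),
      lt_min (lt_min hδ (sub_pos.2 haT)) (by positivity), by simp, by simp, ?_⟩
    calc 2 * C * min (min δ (T - a)) (R / (2 * C + 1)) ≤ 2 * C * (R / (2 * C + 1)) := by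
          gcongr; exact min_le_right _ _
      _ ≤ R := by rw [mul_div_assoc']; exact div_le_of_le_mul₀ (by positivity) R.2 (by linarith)
  -- Solve forward and backward from `T - r / 2`, inside the domain of `f`; the Picard–Lindelöf
  -- window `[T - r, T + r]` reaches past `T`, and uniqueness glues the solution to `f`.
  have ht₀ : T - r / 2 ∈ Icc (T - r) (T + r) := ⟨by linarith, by linarith⟩
  have hsub : Icc (T - r) (T + r) ⊆ Icc (T - δ) (T + δ) :=
    Icc_subset_Icc (by linarith) (by linarith)
  have hball : closedBall (f (T - r / 2)) R ⊆ s := hfs _ ⟨by linarith, by linarith⟩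
  have hpl :
      IsPicardLindelof v (⟨T - r / 2, ht₀⟩ : Icc (T - r) (T + r)) (f (T - r / 2)) R 0 C L :=
    { lipschitzOnWith := fun t ht ↦ (hlip t (hsub ht)).mono hball
      continuousOn := fun y hy ↦ hcont.comp (Continuous.prodMk_left y).continuousOn
        fun _ ht ↦ ⟨hsub ht, hball hy⟩
      norm_le := fun t ht y hy ↦ hle t (hsub ht) y (hball hy)
      mul_max_le := by
        simp only [NNReal.coe_zero, sub_zero]
        rw [max_eq_left (by linarith)]
        nlinarith [C.2] }
  obtain ⟨u, hu₀, hu⟩ := hpl.exists_eq_forall_mem_Icc_hasDerivWithinAt_mem_closedBall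
  have hu' : ∀ t ∈ Ioo (T - r) (T + r), HasDerivAt u (v t (u t)) t ∧ u t ∈ s := fun t ht ↦
    ⟨(hu t (Ioo_subset_Icc_self ht)).1.hasDerivAt (Icc_mem_nhds ht.1 ht.2),
      hball (hu t (Ioo_subset_Icc_self ht)).2⟩
  have hfu : EqOn f u (Ioo (T - r) T) :=
    ODE_solution_unique_of_mem_Ioo (s := fun _ ↦ s)
      (fun t ht ↦ hlip t ⟨by linarith [ht.1], by linarith [ht.2]⟩)
      (⟨by linarith, by linarith⟩ : T - r / 2 ∈ Ioo (T - r) T)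
      (fun t ht ↦ ⟨hf t ⟨by linarith [ht.1], ht.2⟩,
        hfs t ⟨by linarith [ht.1], ht.2⟩ (mem_closedBall_self R.2)⟩)
      (fun t ht ↦ hu' t ⟨ht.1, by linarith [ht.2]⟩) hu₀.symm
  refine ⟨T + r, by linarith, fun t ↦ if t < T then f t else u t, fun t ht ↦ ?_,
    fun t ht ↦ if_pos ht.2⟩
  rcases lt_or_ge t T with htT | htT
  · have hg : (fun t ↦ if t < T then f t else u t) =ᶠ[𝓝 t] f := by
      filter_upwards [Iio_mem_nhds htT] with y hy using if_pos hy
    exact ((hf t ⟨ht.1, htT⟩).congr_of_eventuallyEq hg).congr_deriv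
      (by simp only [if_pos htT])
  · have hg : (fun t ↦ if t < T then f t else u t) =ᶠ[𝓝 t] u := by
      filter_upwards [Ioo_mem_nhds (by linarith : T - r < t) ht.2] with y hy
      split_ifs with hyT
      · exact hfu ⟨hy.1, hyT⟩
      · rfl
    exact ((hu' t ⟨by linarith, ht.2⟩).1.congr_of_eventuallyEq hg).congr_deriv
      (by simp only [if_neg htT.not_gt])

end Continuation

theorem le_of_hasDerivAt_of_lt_barrier {v : ℝ → ℝ → ℝ} {f B B' : ℝ → ℝ} {a T : ℝ}
    (hf : ∀ t ∈ Ico a T, HasDerivAt f (v t (f t)) t)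
    (hB : ∀ t ∈ Ico a T, HasDerivAt B (B' t) t) (ha : f a ≤ B a)
    (hvB : ∀ t ∈ Ico a T, v t (B t) < B' t) :
    ∀ t ∈ Ico a T, f t ≤ B t := fun b hb ↦
  have hIcc : ∀ t ∈ Icc a b, t ∈ Ico a T := fun _ ht ↦ ⟨ht.1, ht.2.trans_lt hb.2⟩
  have hIco : ∀ t ∈ Ico a b, t ∈ Ico a T := fun t ht ↦ hIcc t (Ico_subset_Icc_self ht)
  image_le_of_deriv_right_lt_deriv_boundary'
    (fun t ht ↦ (hf t (hIcc t ht)).continuousAt.continuousWithinAt)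
    (fun t ht ↦ (hf t (hIco t ht)).hasDerivWithinAt) ha
    (fun t ht ↦ (hB t (hIcc t ht)).continuousAt.continuousWithinAt)
    (fun t ht ↦ (hB t (hIco t ht)).hasDerivWithinAt)
    (fun t ht hfB ↦ hfB ▸ hvB t (hIco t ht)) ⟨hb.1, le_rfl⟩

theorem hasDerivAt_div_one_sub_sq {x : ℝ} (hx : 1 - x ^ 2 ≠ 0) :
    HasDerivAt (fun y ↦ y / (1 - y ^ 2)) ((1 + x ^ 2) / (1 - x ^ 2) ^ 2) x := by
  refine ((hasDerivAt_id' x).div ((hasDerivAt_pow 2 x).const_sub 1) hx).congr_deriv ?_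
  ring

theorem div_one_sub_sq_le_div_one_sub_sq {x y : ℝ} (hx : 0 ≤ x) (hxy : x ≤ y) (hy : y < 1) :
    x / (1 - x ^ 2) ≤ y / (1 - y ^ 2) :=
  div_le_div₀ (hx.trans hxy) hxy (by nlinarith) (by nlinarith)

noncomputable def riccati (c x y : ℝ) : ℝ :=
  1.6 * c / (1 - x ^ 2) * y + 4.5 * c / (1 - x ^ 2) ^ 2 + y ^ 2

section Riccati

variable {c : ℝ}

theorem riccati_div_one_sub_sq_lt (hc : 0 < c) (hc' : 6.1 * c ≤ 1) {x : ℝ} (hx : x ^ 2 < 1) :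
    riccati c x (x / (1 - x ^ 2)) < (1 + x ^ 2) / (1 - x ^ 2) ^ 2 := by
  have hx₀ : 0 < 1 - x ^ 2 := by linarith
  have hx1 : x < 1 := by nlinarith
  have hlt : 1.6 * c * x + 4.5 * c < 1 := by nlinarith [mul_lt_mul_of_pos_left hx1 hc]
  calc riccati c x (x / (1 - x ^ 2)) = (1.6 * c * x + 4.5 * c + x ^ 2) / (1 - x ^ 2) ^ 2 := by
        unfold riccati; field_simp
    _ < (1 + x ^ 2) / (1 - x ^ 2) ^ 2 := by gcongr

theorem riccati_zero_pos (hc : 0 < c) {x : ℝ} (hx : 1 - x ^ 2 ≠ 0) : 0 < riccati c x 0 := by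
  simpa [riccati] using div_pos (by positivity : (0 : ℝ) < 4.5 * c) (sq_pos_of_ne_zero hx)

theorem hasDerivAt_riccati (c x y : ℝ) :
    HasDerivAt (riccati c x) (1.6 * c / (1 - x ^ 2) + 2 * y) y := by
  unfold riccati
  refine ((((hasDerivAt_id' y).const_mul _).add_const _).add (hasDerivAt_pow 2 y)).congr_deriv ?_
  ring

theorem continuousOn_riccati (c : ℝ) :
    ContinuousOn (Function.uncurry (riccati c)) (Ioo (-1) 1 ×ˢ univ) := by
  have hne : ∀ p ∈ Ioo (-1 : ℝ) 1 ×ˢ (univ : Set ℝ), 1 - p.1 ^ 2 ≠ 0 := fun p hp ↦ by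
    nlinarith [hp.1.1, hp.1.2]
  have hne2 : ∀ p ∈ Ioo (-1 : ℝ) 1 ×ˢ (univ : Set ℝ), (1 - p.1 ^ 2) ^ 2 ≠ 0 := fun p hp ↦
    pow_ne_zero 2 (hne p hp)
  unfold riccati Function.uncurry
  fun_prop (disch := assumption)

theorem exists_lipschitzOnWith_riccati_and_norm_le {K : Set ℝ} (hK : IsCompact K)
    (hK₁ : K ⊆ Ioo (-1) 1) (N : ℝ) :
    ∃ L C : ℝ≥0, ∀ t ∈ K, LipschitzOnWith L (riccati c t) (closedBall 0 N) ∧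
      ∀ y ∈ closedBall 0 N, ‖riccati c t y‖ ≤ C := by
  have hP : IsCompact (K ×ˢ closedBall (0 : ℝ) N) := hK.prod (isCompact_closedBall 0 N)
  have hPsub : K ×ˢ closedBall (0 : ℝ) N ⊆ Ioo (-1) 1 ×ˢ univ := prod_mono hK₁ (subset_univ _)
  have hne : ∀ p ∈ K ×ˢ closedBall (0 : ℝ) N, 1 - p.1 ^ 2 ≠ 0 := fun p hp ↦ by
    nlinarith [(hK₁ hp.1).1, (hK₁ hp.1).2]
  obtain ⟨C, hC⟩ := hP.exists_bound_of_continuousOn ((continuousOn_riccati c).mono hPsub)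
  obtain ⟨L, hL⟩ := hP.exists_bound_of_continuousOn
    (f := fun p : ℝ × ℝ ↦ 1.6 * c / (1 - p.1 ^ 2) + 2 * p.2) (by fun_prop (disch := assumption))
  refine ⟨L.toNNReal, C.toNNReal, fun t ht ↦ ⟨?_, fun y hy ↦
    (hC (t, y) ⟨ht, hy⟩).trans (Real.le_coe_toNNReal C)⟩⟩
  exact (convex_closedBall 0 N).lipschitzOnWith_of_nnnorm_hasDerivWithin_le
    (fun y _ ↦ (hasDerivAt_riccati c t y).hasDerivWithinAt)
    (fun y hy ↦ by rw [← norm_toNNReal]; exact Real.toNNReal_le_toNNReal (hL (t, y) ⟨ht, hy⟩))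

theorem riccati_solution_nonneg (hc : 0 < c) {T : ℝ} (hT : T ≤ 1) {h : ℝ → ℝ} (h0 : h 0 = 0)
    (hode : ∀ x ∈ Ico 0 T, HasDerivAt h (riccati c x (h x)) x) :
    ∀ x ∈ Ico 0 T, 0 ≤ h x := by
  have hneg := le_of_hasDerivAt_of_lt_barrier (v := fun x y ↦ -riccati c x (-y)) (f := -h)
    (B := 0) (B' := 0) (fun x hx ↦ by simpa using (hode x hx).neg)
    (fun x _ ↦ hasDerivAt_const x 0) (by simp [h0])
    (fun x hx ↦ by simpa using riccati_zero_pos hc (x := x) (by nlinarith [hx.1, hx.2]))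
  exact fun x hx ↦ by simpa using hneg x hx

theorem riccati_solution_le_div_one_sub_sq (hc : 0 < c) (hc' : 6.1 * c ≤ 1) {T : ℝ}
    (hT : T ≤ 1) {h : ℝ → ℝ} (h0 : h 0 = 0)
    (hode : ∀ x ∈ Ico 0 T, HasDerivAt h (riccati c x (h x)) x) :
    ∀ x ∈ Ico 0 T, h x ≤ x / (1 - x ^ 2) :=
  have hsq : ∀ x ∈ Ico (0 : ℝ) T, x ^ 2 < 1 := fun x hx ↦ by nlinarith [hx.1, hx.2]
  le_of_hasDerivAt_of_lt_barrier hode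
    (fun x hx ↦ hasDerivAt_div_one_sub_sq (by linarith [hsq x hx])) (by simp [h0])
    (fun x hx ↦ riccati_div_one_sub_sq_lt hc hc' (hsq x hx))

theorem exists_riccati_extension_of_abs_le {T M : ℝ} (hT₀ : 0 < T) (hT₁ : T < 1) {h : ℝ → ℝ}
    (hode : ∀ x ∈ Ico 0 T, HasDerivAt h (riccati c x (h x)) x)
    (hM : ∀ x ∈ Ico 0 T, |h x| ≤ M) :
    ∃ T' > T, ∃ g : ℝ → ℝ, (∀ x ∈ Ico 0 T', HasDerivAt g (riccati c x (g x)) x) ∧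
      EqOn g h (Ico 0 T) := by
  have hI : Icc (T - (1 - T) / 2) (T + (1 - T) / 2) ⊆ Ioo (-1) 1 := fun t ht ↦
    ⟨by linarith [ht.1], by linarith [ht.2]⟩
  obtain ⟨L, C, hLC⟩ :=
    exists_lipschitzOnWith_riccati_and_norm_le (c := c) isCompact_Icc hI (M + 1)
  refine exists_hasDerivAt_extension (v := riccati c) (s := closedBall 0 (M + 1)) (R := 1)
    hT₀ (by linarith) one_pos (fun t ht ↦ (hLC t ht).1)
    ((continuousOn_riccati c).mono (prod_mono hI (subset_univ _))) (fun t ht ↦ (hLC t ht).2) hode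
    (fun x hx ↦ closedBall_subset_closedBall' ?_)
  rw [NNReal.coe_one, dist_zero_right, Real.norm_eq_abs, add_comm]
  gcongr
  exact hM x hx

end Riccati

theorem stmt_9 (c : ℝ) (hc : 0 < c) (hc' : 6.1 * c ≤ 1)
    (T : ℝ) (hT0 : 0 < T) (hT1 : T ≤ 1)
    (h : ℝ → ℝ) (h0 : h 0 = 0)
    (hode : ∀ x ∈ Set.Ico (0 : ℝ) T,
      HasDerivAt h
        ((1.6 * c / (1 - x ^ 2)) * h x + 4.5 * c / (1 - x ^ 2) ^ 2 + h x ^ 2) x)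
    -- maximality: any solution on a larger subinterval of [0,1) extending h forces equality of intervals
    (hmax : ∀ (T' : ℝ) (g : ℝ → ℝ), T ≤ T' → T' ≤ 1 → g 0 = 0 →
      (∀ x ∈ Set.Ico (0 : ℝ) T',
        HasDerivAt g
          ((1.6 * c / (1 - x ^ 2)) * g x + 4.5 * c / (1 - x ^ 2) ^ 2 + g x ^ 2) x) →
      (∀ x ∈ Set.Ico (0 : ℝ) T, g x = h x) → T' = T) :
    T = 1 ∧ ∀ x ∈ Set.Ico (0 : ℝ) 1, h x ≤ x / (1 - x ^ 2) := by
  have hle := riccati_solution_le_div_one_sub_sq hc hc' hT1 h0 hode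
  have hT : T = 1 := by
    by_contra hne
    have hT1' : T < 1 := hT1.lt_of_ne hne
    have hbound : ∀ x ∈ Ico 0 T, |h x| ≤ T / (1 - T ^ 2) := fun x hx ↦ by
      rw [abs_of_nonneg (riccati_solution_nonneg hc hT1 h0 hode x hx)]
      exact (hle x hx).trans (div_one_sub_sq_le_div_one_sub_sq hx.1 hx.2.le hT1')
    obtain ⟨T', hTT', g, hg, hgh⟩ := exists_riccati_extension_of_abs_le hT0 hT1' hode hbound
    have := hmax (min T' 1) g (le_min hTT'.le hT1) (min_le_right _ _)
      ((hgh ⟨le_rfl, hT0⟩).trans h0) (fun x hx ↦ hg x ⟨hx.1, hx.2.trans_le (min_le_left _ _)⟩)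
      hgh
    exact (lt_min hTT' hT1').ne' this
  exact ⟨hT, fun x hx ↦ hle x (hT ▸ hx)⟩
end

section
/- Let n ≥ 2 and ε = 3√2 − 4. If n√n·α ≤ ε for α > 0, then (2√(2n)/(n-1))(2+(n-1)²)α + (2√n/(n-1))(n+(n-1)²)α² ≤ 4.5 n√n α. -/
open Real

/-!
Factoring out `√n α / (n - 1)` reduces the claim to
`2√2 (2 + (n-1)²) + 2 (n + (n-1)²) α ≤ 4.5 n (n - 1)`.
At `n = 2` this is an equality when `2√2 α = 3√2 - 4`, which is where the constant `3√2 - 4`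
comes from; for `n ≥ 3` there is room to spare, since `3√2 - 4 < 1/2`.
-/

lemma lhs_eq_sqrt_mul_div_mul (n α : ℝ) :
    2 * √(2 * n) / (n - 1) * (2 + (n - 1) ^ 2) * α + 2 * √n / (n - 1) * (n + (n - 1) ^ 2) * α ^ 2 =
      √n * α / (n - 1) * (2 * √2 * (2 + (n - 1) ^ 2) + 2 * (n + (n - 1) ^ 2) * α) := by
  rw [sqrt_mul zero_le_two]
  ring

lemma two_sqrt_two_mul_add_le_at_two {α : ℝ} (hsmall : 2 * √2 * α ≤ 3 * √2 - 4) :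
    2 * √2 * (2 + (2 - 1) ^ 2) + 2 * (2 + (2 - 1) ^ 2) * α ≤ 4.5 * 2 * (2 - 1) := by
  have hsq : √2 * √2 = 2 := mul_self_sqrt zero_le_two
  have h := mul_le_mul_of_nonneg_left hsmall (sqrt_nonneg 2)
  rw [show √2 * (2 * √2 * α) = 2 * (√2 * √2) * α by ring,
    show √2 * (3 * √2 - 4) = 3 * (√2 * √2) - 4 * √2 by ring, hsq] at h
  norm_num
  linarith

lemma two_sqrt_two_mul_add_le_of_three_le {n α : ℝ} (hn : 3 ≤ n) (hα : 0 ≤ α)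
    (hsmall : n * √n * α ≤ 3 * √2 - 4) :
    2 * √2 * (2 + (n - 1) ^ 2) + 2 * (n + (n - 1) ^ 2) * α ≤ 4.5 * n * (n - 1) := by
  have hq := sqrt_two_lt_three_halves
  have hs : 1 ≤ √n := one_le_sqrt.mpr (by linarith)
  have hnα : n * α ≤ 1 / 2 :=
    calc n * α ≤ n * √n * α := by nlinarith [mul_nonneg (by linarith : (0 : ℝ) ≤ n) hα]
      _ ≤ 1 / 2 := by linarith
  have hαterm : 2 * (n + (n - 1) ^ 2) * α ≤ n :=
    calc 2 * (n + (n - 1) ^ 2) * α ≤ 2 * n ^ 2 * α := by gcongr; nlinarith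
      _ = 2 * n * (n * α) := by ring
      _ ≤ n := by nlinarith
  nlinarith

theorem stmt_15 (n : ℕ) (hn : 2 ≤ n) (α : ℝ) (hα : 0 < α)
    (hsmall : (n : ℝ) * Real.sqrt n * α ≤ 3 * Real.sqrt 2 - 4) :
    (2 * Real.sqrt (2 * n) / ((n : ℝ) - 1)) * (2 + ((n : ℝ) - 1) ^ 2) * α +
        (2 * Real.sqrt n / ((n : ℝ) - 1)) * ((n : ℝ) + ((n : ℝ) - 1) ^ 2) * α ^ 2 ≤
      4.5 * (n : ℝ) * Real.sqrt n * α := by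
  have hn2 : (2 : ℝ) ≤ n := by exact_mod_cast hn
  have hrhs : 4.5 * (n : ℝ) * √n * α = √n * α / (n - 1) * (4.5 * n * (n - 1)) := by
    field_simp [show (n : ℝ) - 1 ≠ 0 by linarith]
  rw [lhs_eq_sqrt_mul_div_mul, hrhs]
  refine mul_le_mul_of_nonneg_left ?_ (div_nonneg (by positivity) (by linarith))
  obtain rfl | h3 := hn.eq_or_lt
  · exact_mod_cast two_sqrt_two_mul_add_le_at_two (by exact_mod_cast hsmall)
  · exact two_sqrt_two_mul_add_le_of_three_le (by exact_mod_cast h3) hα.le hsmall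
end

section
/- If r² < 1/5, then for every s ∈ (0,1), s·((1-s²r²)/(1-r²))² < 1. -/
theorem stmt_18 (r s : ℝ) (hr0 : 0 ≤ r) (hr : r ^ 2 < 1 / 5) (hs0 : 0 < s) (hs1 : s < 1) :
    s * ((1 - s ^ 2 * r ^ 2) / (1 - r ^ 2)) ^ 2 < 1 := by
  set x := r ^ 2 with hxdef
  have hx : 0 ≤ x := sq_nonneg r
  have h1 : 0 < 1 - x := by nlinarith
  have hQ : 0 < 1 - 2 * x * (1 + s + s ^ 2) + x ^ 2 * (1 + s + s ^ 2 + s ^ 3 + s ^ 4) := by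
    nlinarith [mul_nonneg hx hx, sq_nonneg (1 - s), mul_nonneg hx hs0.le,
      mul_nonneg (mul_nonneg hx hx) hs0.le, mul_nonneg (mul_nonneg hx hx) (mul_nonneg hs0.le hs0.le),
      mul_nonneg (mul_nonneg hx hx) (mul_nonneg (mul_nonneg hs0.le hs0.le) hs0.le),
      mul_nonneg (mul_nonneg hx hx) (mul_nonneg (mul_nonneg hs0.le hs0.le) (mul_nonneg hs0.le hs0.le)),
      mul_nonneg hx (mul_nonneg hs0.le hs0.le),
      mul_pos (sub_pos.mpr hr) (sub_pos.mpr hs1)]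
  have key : 0 < (1 - x) ^ 2 - s * (1 - s ^ 2 * x) ^ 2 := by
    have h := mul_pos (sub_pos.mpr hs1) hQ
    nlinarith [h]
  rw [div_pow, ← mul_div_assoc, div_lt_one (by positivity)]
  nlinarith [key]
end
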